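/- If ρ is a minimizer of the causal action under variations of bounded total variation preserving total volume, then the function ℓ(x) = ∫ L(x,y) dρ(y) is constant on the support of ρ, and this constant equals the infimum of ℓ over 𝓕 (Euler–Lagrange equations); in the finite (discrete) setting with 𝓕 a finite set and ρ a measure on 𝓕, a minimizer of S[ρ] = Σ_{x,y} L(x,y) ρ(x) ρ(y) subject to Σ_x ρ(x) = const satisfies ℓ(x) = min_{z∈𝓕} ℓ(z) for every x with ρ(x) > 0. -/

import Mathlib

/-!
Moving mass `t` from a point `x` of the support of `ρ` to an arbitrary point `z` keeps the
weight admissible for `0 < t ≤ ρ x`. Since the action is a quadratic form with symmetric kernel,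
it changes by `2 t (ℓ z - ℓ x) + O(t²)`, so minimality forces `ℓ x ≤ ℓ z`.
-/

open Finset Matrix Filter Topology

lemma nonneg_of_forall_mul_add_sq_mul_nonneg {b q ε : ℝ} (hε : 0 < ε)
    (h : ∀ t, 0 < t → t ≤ ε → 0 ≤ t * b + t ^ 2 * q) : 0 ≤ b := by
  have hlim : Tendsto (fun t => b + t * q) (𝓝[>] 0) (𝓝 b) :=
    ((continuous_const.add (continuous_id.mul continuous_const)).tendsto' 0 b
      (by simp)).mono_left nhdsWithin_le_nhds
  refine ge_of_tendsto hlim ?_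
  filter_upwards [Ioc_mem_nhdsGT hε] with t ⟨ht0, htε⟩
  refine nonneg_of_mul_nonneg_right (a := t) ?_ ht0
  nlinarith [h t ht0 htε]

namespace Matrix

variable {n : Type*} [Fintype n]

lemma IsSymm.dotProduct_mulVec_add_smul {R : Type*} [CommSemiring R] {A : Matrix n n R}
    (hA : A.IsSymm) (v w : n → R) (t : R) :
    (v + t • w) ⬝ᵥ A *ᵥ (v + t • w) =
      v ⬝ᵥ A *ᵥ v + t * (2 * (w ⬝ᵥ A *ᵥ v)) + t ^ 2 * (w ⬝ᵥ A *ᵥ w) := by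
  have hswap : v ⬝ᵥ A *ᵥ w = w ⬝ᵥ A *ᵥ v := by
    rw [dotProduct_mulVec, dotProduct_comm, ← vecMul_transpose, hA.eq]
  simp only [mulVec_add, mulVec_smul, add_dotProduct, dotProduct_add, smul_dotProduct,
    dotProduct_smul, smul_eq_mul, hswap]
  ring

theorem IsSymm.dotProduct_mulVec_nonneg_of_isMinOn {A : Matrix n n ℝ} (hA : A.IsSymm)
    {K : Set (n → ℝ)} {v w : n → ℝ} (hmin : IsMinOn (fun u => u ⬝ᵥ A *ᵥ u) K v)
    {ε : ℝ} (hε : 0 < ε) (hK : ∀ t, 0 < t → t ≤ ε → v + t • w ∈ K) :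
    0 ≤ w ⬝ᵥ A *ᵥ v := by
  have h2 : 0 ≤ 2 * (w ⬝ᵥ A *ᵥ v) := by
    refine nonneg_of_forall_mul_add_sq_mul_nonneg (q := w ⬝ᵥ A *ᵥ w) hε fun t ht0 htε => ?_
    have := isMinOn_iff.mp hmin _ (hK t ht0 htε)
    rw [hA.dotProduct_mulVec_add_smul] at this
    linarith
  linarith

lemma sum_sum_mul_mul_eq_dotProduct_mulVec {R : Type*} [CommSemiring R] (L : n → n → R)
    (v : n → R) : ∑ x, ∑ y, L x y * v x * v y = v ⬝ᵥ of L *ᵥ v :=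
  sum_congr rfl fun x _ => by
    simp only [dotProduct, mulVec, of_apply, mul_sum]
    exact sum_congr rfl fun y _ => by ring

end Matrix

section MassTransfer

variable {n : Type*} [DecidableEq n] (ρ : n → ℝ) (x z : n) (t : ℝ)

lemma nonneg_add_smul_single_sub_single (hρ : ∀ y, 0 ≤ ρ y) (ht0 : 0 ≤ t) (ht : t ≤ ρ x)
    (y : n) : 0 ≤ (ρ + t • (Pi.single z 1 - Pi.single x 1) : n → ℝ) y := by
  have hz : 0 ≤ t * (Pi.single z 1 : n → ℝ) y :=
    mul_nonneg ht0 (by by_cases hy : y = z <;> simp [hy])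
  have hx : 0 ≤ ρ y - t * (Pi.single x 1 : n → ℝ) y := by
    by_cases hy : y = x
    · subst hy; simpa using ht
    · simpa [hy] using hρ y
  simp only [Pi.add_apply, Pi.smul_apply, Pi.sub_apply, smul_eq_mul]
  linarith

lemma sum_add_smul_single_sub_single [Fintype n] :
    ∑ y, (ρ + t • (Pi.single z 1 - Pi.single x 1) : n → ℝ) y = ∑ y, ρ y := by
  simp [sum_add_distrib, ← mul_sum, sum_sub_distrib]

end MassTransfer

theorem discrete_euler_lagrange_general {F : Type*} [Fintype F]
    (L : F → F → ℝ) (hLsymm : ∀ x y, L x y = L y x)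
    (ρ : F → ℝ) (hρ : ∀ x, 0 ≤ ρ x) (c : ℝ) (hmass : ∑ x, ρ x = c)
    (hmin : ∀ ρ' : F → ℝ, (∀ x, 0 ≤ ρ' x) → (∑ x, ρ' x = c) →
      ∑ x, ∑ y, L x y * ρ x * ρ y ≤ ∑ x, ∑ y, L x y * ρ' x * ρ' y) :
    ∀ x : F, 0 < ρ x → ∀ z : F, ∑ y, L x y * ρ y ≤ ∑ y, L z y * ρ y := by
  classical
  intro x hx z
  have hsymm : (of L).IsSymm := ext fun x y => hLsymm y x
  have hfirst := hsymm.dotProduct_mulVec_nonneg_of_isMinOn (v := ρ)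
    (w := Pi.single z 1 - Pi.single x 1) (K := {ρ' | (∀ x, 0 ≤ ρ' x) ∧ ∑ x, ρ' x = c})
    (isMinOn_iff.mpr fun ρ' hρ' => by simpa only [sum_sum_mul_mul_eq_dotProduct_mulVec] using hmin ρ' hρ'.1 hρ'.2) hx
    fun t ht0 htx => ⟨nonneg_add_smul_single_sub_single ρ x z t hρ ht0.le htx,
      (sum_add_smul_single_sub_single ρ x z t).trans hmass⟩
  simp only [sub_dotProduct, single_dotProduct, one_mul, sub_nonneg] at hfirst
  exact hfirst

/-- Discrete Euler–Lagrange equations for the causal action: if `ρ` minimizes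
`S[ρ] = Σ_{x,y} L x y * ρ x * ρ y` among nonnegative weights of fixed total mass
`c > 0`, then `ℓ(x) = Σ_y L x y * ρ y` attains its minimum over `𝓕` at every
point of the support of `ρ`. -/
theorem discrete_euler_lagrange {F : Type*} [Fintype F]
    (L : F → F → ℝ) (hLnonneg : ∀ x y, 0 ≤ L x y) (hLsymm : ∀ x y, L x y = L y x)
    (ρ : F → ℝ) (hρ : ∀ x, 0 ≤ ρ x) (c : ℝ) (hc : 0 < c) (hmass : ∑ x, ρ x = c)
    (hmin : ∀ ρ' : F → ℝ, (∀ x, 0 ≤ ρ' x) → (∑ x, ρ' x = c) →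
      ∑ x, ∑ y, L x y * ρ x * ρ y ≤ ∑ x, ∑ y, L x y * ρ' x * ρ' y) :
    ∀ x : F, 0 < ρ x → ∀ z : F, ∑ y, L x y * ρ y ≤ ∑ y, L z y * ρ y :=
  discrete_euler_lagrange_general L hLsymm ρ hρ c hmass hmin
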